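/- Let {Z_1,…,Z_n} be a generalized normal holomorphic frame around a point o of an almost Kähler manifold (M,g,J,κ). With L(X,Y,Z,W) = g((∇_X B)(Y,Z), W), B(X,Y) = J(∇_X J)Y − (∇_{JX} J)Y, R the Riemann curvature of g, and R^J(X,Y,Z,W) = g(∇_X J∇_Y Z − ∇_Y J∇_X Z − ∇_{[X,Y]} JZ, JW), one has for all i, j, r, s: L(Z̄_i, Z_j, Z_r, Z̄_s)(o) = −2 R^J(Z̄_i, Z_j, Z_r, Z̄_s)(o) + 2 R(Z̄_i, Z_j, Z_r, Z̄_s)(o). -/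
import Mathlib


noncomputable section

/-- An algebraic (Koszul-style) model of a `2n`-dimensional almost Kähler manifold
`(M, g, J, κ)`.  `Point` is the set of points of `M`, `F` plays the role of the
ring of complex-valued smooth functions on `M`, and `V` plays the role of the
module of complexified smooth vector fields on `M`.  The metric `g`, the almost
complex structure `J` and the Levi-Civita connection `nabla` are extended
complex-linearly.  `κ(X,Y) = g(JX,Y)` is required to be closed (so that `κ` is a
symplectic form calibrating `J`), i.e. `(M,g,J,κ)` is an almost Kähler manifold. -/
structure AlmostKahler where
  /-- the points of the manifold `M` -/
  Point : Type
  /-- half the real dimension of `M` -/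
  n : ℕ
  /-- the ring of complex-valued smooth functions on `M` -/
  F : Type
  [ringF : CommRing F]
  [algF : Algebra ℂ F]
  /-- the module of complexified smooth vector fields on `M` -/
  V : Type
  [grpV : AddCommGroup V]
  [modV : Module F V]
  /-- evaluation of a function at a point -/
  eval : Point → F → ℂ
  eval_add : ∀ p f h, eval p (f + h) = eval p f + eval p h
  eval_mul : ∀ p f h, eval p (f * h) = eval p f * eval p h
  eval_algebraMap : ∀ p (c : ℂ), eval p (algebraMap ℂ F c) = c
  /-- complex conjugation of functions -/
  conjF : F → F
  conjF_add : ∀ f h, conjF (f + h) = conjF f + conjF h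
  conjF_mul : ∀ f h, conjF (f * h) = conjF f * conjF h
  conjF_conjF : ∀ f, conjF (conjF f) = f
  conjF_algebraMap : ∀ c : ℂ, conjF (algebraMap ℂ F c) = algebraMap ℂ F (starRingEnd ℂ c)
  eval_conjF : ∀ p f, eval p (conjF f) = starRingEnd ℂ (eval p f)
  /-- complex conjugation of vector fields -/
  conjV : V → V
  conjV_add : ∀ X Y, conjV (X + Y) = conjV X + conjV Y
  conjV_smul : ∀ (f : F) (X : V), conjV (f • X) = conjF f • conjV X
  conjV_conjV : ∀ X, conjV (conjV X) = X
  /-- the action of a vector field on a function, as a derivation -/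
  deriv : V → F → F
  deriv_add_left : ∀ X Y f, deriv (X + Y) f = deriv X f + deriv Y f
  deriv_smul_left : ∀ (h : F) (X : V) (f : F), deriv (h • X) f = h * deriv X f
  deriv_add : ∀ X f h, deriv X (f + h) = deriv X f + deriv X h
  deriv_mul : ∀ X f h, deriv X (f * h) = f * deriv X h + h * deriv X f
  deriv_algebraMap : ∀ X (c : ℂ), deriv X (algebraMap ℂ F c) = 0
  deriv_conj : ∀ X f, deriv (conjV X) (conjF f) = conjF (deriv X f)
  /-- vector fields are determined by their action on functions -/
  deriv_ext : ∀ X Y : V, (∀ f, deriv X f = deriv Y f) → X = Y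
  /-- the Lie bracket of vector fields -/
  bracket : V → V → V
  bracket_deriv : ∀ X Y f, deriv (bracket X Y) f = deriv X (deriv Y f) - deriv Y (deriv X f)
  /-- the (complex bilinear extension of the) Riemannian metric `g` -/
  g : V → V → F
  g_add_left : ∀ X Y Z, g (X + Y) Z = g X Z + g Y Z
  g_smul_left : ∀ (f : F) (X Y : V), g (f • X) Y = f * g X Y
  g_symm : ∀ X Y, g X Y = g Y X
  g_conj : ∀ X Y, conjF (g X Y) = g (conjV X) (conjV Y)
  /-- positivity of the underlying Riemannian metric -/
  g_pos : ∀ p X, 0 ≤ (eval p (g X (conjV X))).re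
  g_nondeg : ∀ X : V, (∀ Y, g X Y = 0) → X = 0
  /-- the almost complex structure `J` (complex linearly extended) -/
  J : V → V
  J_add : ∀ X Y, J (X + Y) = J X + J Y
  J_smul : ∀ (f : F) (X : V), J (f • X) = f • J X
  J_J : ∀ X, J (J X) = -X
  J_conj : ∀ X, conjV (J X) = J (conjV X)
  /-- `g` is Hermitian with respect to `J`; equivalently `J` is calibrated by the
  fundamental `2`-form `κ(X,Y) = g(JX,Y)`, i.e. `g(·,·) = κ(·,J·)` -/
  g_J : ∀ X Y, g (J X) (J Y) = g X Y
  /-- the Levi-Civita connection of `g` (complex linearly extended) -/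
  nabla : V → V → V
  nabla_add_left : ∀ X Y Z, nabla (X + Y) Z = nabla X Z + nabla Y Z
  nabla_smul_left : ∀ (f : F) (X Y : V), nabla (f • X) Y = f • nabla X Y
  nabla_add_right : ∀ X Y Z, nabla X (Y + Z) = nabla X Y + nabla X Z
  nabla_leibniz : ∀ (X : V) (f : F) (Y : V), nabla X (f • Y) = deriv X f • Y + f • nabla X Y
  nabla_torsion_free : ∀ X Y, nabla X Y - nabla Y X = bracket X Y
  nabla_metric : ∀ X Y Z, deriv X (g Y Z) = g (nabla X Y) Z + g Y (nabla X Z)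
  nabla_conj : ∀ X Y, conjV (nabla X Y) = nabla (conjV X) (conjV Y)
  /-- the fundamental `2`-form `κ(X,Y) = g(JX,Y)` is closed: `dκ = 0`,
  so `κ` is a symplectic form on `M` -/
  kappa_closed : ∀ X Y Z,
    deriv X (g (J Y) Z) - deriv Y (g (J X) Z) + deriv Z (g (J X) Y)
      - g (J (bracket X Y)) Z + g (J (bracket X Z)) Y - g (J (bracket Y Z)) X = 0

namespace AlmostKahler

instance (M : AlmostKahler) : CommRing M.F := M.ringF
instance (M : AlmostKahler) : Algebra ℂ M.F := M.algF
instance (M : AlmostKahler) : AddCommGroup M.V := M.grpV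
instance (M : AlmostKahler) : Module M.F M.V := M.modV

variable (M : AlmostKahler)

/-- a constant function on `M` -/
def cF (c : ℂ) : M.F := algebraMap ℂ M.F c

/-- scalar multiplication of a vector field by a complex constant -/
def csmul (c : ℂ) (X : M.V) : M.V := algebraMap ℂ M.F c • X

/-- a real vector field: one fixed by conjugation -/
def IsReal (X : M.V) : Prop := M.conjV X = X

/-- a vector field of type `(1,0)`: a section of the `i`-eigenbundle of `J` -/
def IsHolo (Z : M.V) : Prop := M.J Z = M.csmul Complex.I Z

/-- a vector field of type `(0,1)`: a section of the `(−i)`-eigenbundle of `J` -/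
def IsAntiHolo (W : M.V) : Prop := M.J W = M.csmul (-Complex.I) W

/-- the vector field `X` vanishes at the point `p` -/
def VanishesAt (p : M.Point) (X : M.V) : Prop := ∀ f, M.eval p (M.deriv X f) = 0

/-- the value of the vector field `X` at the point `p` is of type `(0,1)` -/
def AntiHoloAt (p : M.Point) (X : M.V) : Prop :=
  M.VanishesAt p (M.J X + M.csmul Complex.I X)

/-- the projection of a vector field onto its `(0,1)`-part `W^{0,1}` -/
def proj01 (W : M.V) : M.V := M.csmul (1/2) (W + M.csmul Complex.I (M.J W))

/-- the Nijenhuis tensor `N_J(X,Y) = [JX,JY] − J[JX,Y] − J[X,JY] − [X,Y]` -/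
def N (X Y : M.V) : M.V :=
  M.bracket (M.J X) (M.J Y) - M.J (M.bracket (M.J X) Y) - M.J (M.bracket X (M.J Y))
    - M.bracket X Y

/-- `J` is integrable: the Nijenhuis tensor vanishes -/
def Integrable : Prop := ∀ X Y, M.N X Y = 0

/-- `(M,g,J,κ)` is a Kähler manifold: the (`κ`-calibrated) almost complex structure
`J` is integrable, i.e. the Nijenhuis tensor vanishes -/
def IsKahler : Prop := ∀ X Y, M.N X Y = 0

/-- the covariant derivative `(∇_X J)(Y) = ∇_X (JY) − J ∇_X Y` -/
def nablaJ (X Y : M.V) : M.V := M.nabla X (M.J Y) - M.J (M.nabla X Y)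

/-- the covariant derivative of the Nijenhuis tensor, `(∇_X N_J)(Y,Z)` -/
def nablaN (X Y Z : M.V) : M.V :=
  M.nabla X (M.N Y Z) - M.N (M.nabla X Y) Z - M.N Y (M.nabla X Z)

/-- the `(2,1)`-tensor `B(X,Y) = J(∇_X J)Y − (∇_{JX} J)Y` -/
def B (X Y : M.V) : M.V := M.J (M.nablaJ X Y) - M.nablaJ (M.J X) Y

/-- the covariant derivative `(∇_X B)(Y,Z)` -/
def nablaB (X Y Z : M.V) : M.V :=
  M.nabla X (M.B Y Z) - M.B (M.nabla X Y) Z - M.B Y (M.nabla X Z)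

/-- the tensor `L(X,Y,Z,W) = g((∇_X B)(Y,Z), W)` -/
def L (X Y Z W : M.V) : M.F := M.g (M.nablaB X Y Z) W

/-- the Riemann curvature tensor of `g`:
`R(X,Y,Z,W) = g(∇_X ∇_Y Z − ∇_Y ∇_X Z − ∇_{[X,Y]} Z, W)` -/
def R (X Y Z W : M.V) : M.F :=
  M.g (M.nabla X (M.nabla Y Z) - M.nabla Y (M.nabla X Z) - M.nabla (M.bracket X Y) Z) W

/-- the tensor `R^J(X,Y,Z,W) = g(∇_X J∇_Y Z − ∇_Y J∇_X Z − ∇_{[X,Y]} JZ, JW)` -/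
def RJ (X Y Z W : M.V) : M.F :=
  M.g (M.nabla X (M.J (M.nabla Y Z)) - M.nabla Y (M.J (M.nabla X Z))
    - M.nabla (M.bracket X Y) (M.J Z)) (M.J W)

/-- the Hermitian connection `∇̃ = ∇ − (1/2) J ∇J`,
i.e. `∇̃_X Y = ∇_X Y − (1/2) J((∇_X J)Y)` -/
def hnabla (X Y : M.V) : M.V := M.nabla X Y - M.csmul (1/2) (M.J (M.nablaJ X Y))

/-- the torsion of the Hermitian connection -/
def hT (X Y : M.V) : M.V := M.hnabla X Y - M.hnabla Y X - M.bracket X Y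

/-- the curvature tensor `R̃` of the Hermitian connection `∇̃` -/
def hR (X Y Z W : M.V) : M.F :=
  M.g (M.hnabla X (M.hnabla Y Z) - M.hnabla Y (M.hnabla X Z)
    - M.hnabla (M.bracket X Y) Z) W

/-- `Z : Fin M.n → M.V` is a generalized normal holomorphic frame around the
point `o`: a local `(1,0)`-frame around `o` such that
(1) `∇_{Z_k} Z̄_i (o) = 0`;
(2) `∇_{Z_k} Z_i (o)` is of type `(0,1)`;
(3) `G_{r s̄} = g(Z_r, Z̄_s)` satisfies `G_{r s̄}(o) = δ_{rs}` and `dG_{r s̄}[o] = 0`;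
(4) `∇_{Z_r} ∇_{Z̄_k} Z_i (o) = 0`. -/
structure IsGNHF (o : M.Point) (Z : Fin M.n → M.V) : Prop where
  holo : ∀ i, M.IsHolo (Z i)
  frameAt : ∀ W : M.V, M.IsHolo W →
    ∃ c : Fin M.n → ℂ, M.VanishesAt o (W - ∑ i, M.csmul (c i) (Z i))
  cond1 : ∀ k i, M.VanishesAt o (M.nabla (Z k) (M.conjV (Z i)))
  cond2 : ∀ k i, M.AntiHoloAt o (M.nabla (Z k) (Z i))
  cond3a : ∀ r s, M.eval o (M.g (Z r) (M.conjV (Z s))) = if r = s then 1 else 0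
  cond3b : ∀ r s X, M.eval o (M.deriv X (M.g (Z r) (M.conjV (Z s)))) = 0
  cond4 : ∀ r k i, M.VanishesAt o (M.nabla (Z r) (M.nabla (M.conjV (Z k)) (Z i)))

end AlmostKahler

namespace AlmostKahler

variable {M : AlmostKahler}

lemma cF_neg (a : ℂ) : M.cF (-a) = - M.cF a := map_neg _ _

lemma cF_I_I : M.cF Complex.I * M.cF Complex.I = -1 := by
  unfold cF
  rw [← map_mul, Complex.I_mul_I, map_neg, map_one]

lemma g_neg_left (X Y : M.V) : M.g (-X) Y = - M.g X Y := by
  rw [← neg_one_smul M.F X, M.g_smul_left, neg_one_mul]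

lemma g_sub_left (X X' Y : M.V) : M.g (X - X') Y = M.g X Y - M.g X' Y := by
  rw [sub_eq_add_neg, M.g_add_left, g_neg_left, sub_eq_add_neg]

lemma g_add_right (X Y Z : M.V) : M.g X (Y + Z) = M.g X Y + M.g X Z := by
  rw [M.g_symm, M.g_add_left, M.g_symm Y X, M.g_symm Z X]

lemma g_neg_right (X Y : M.V) : M.g X (-Y) = - M.g X Y := by
  rw [M.g_symm, g_neg_left, M.g_symm Y X]

lemma g_sub_right (X Y Z : M.V) : M.g X (Y - Z) = M.g X Y - M.g X Z := by
  rw [M.g_symm, g_sub_left, M.g_symm Y X, M.g_symm Z X]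

lemma g_smul_right (f : M.F) (X Y : M.V) : M.g X (f • Y) = f * M.g X Y := by
  rw [M.g_symm, M.g_smul_left, M.g_symm Y X]

lemma g_csmul_left (c : ℂ) (X Y : M.V) : M.g (M.csmul c X) Y = M.cF c * M.g X Y :=
  M.g_smul_left _ _ _

lemma g_csmul_right (c : ℂ) (X Y : M.V) : M.g X (M.csmul c Y) = M.cF c * M.g X Y :=
  g_smul_right _ _ _

lemma J_csmul (c : ℂ) (X : M.V) : M.J (M.csmul c X) = M.csmul c (M.J X) :=
  M.J_smul _ _

lemma J_neg (X : M.V) : M.J (-X) = - M.J X := by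
  rw [← neg_one_smul M.F X, M.J_smul, neg_one_smul]

lemma J_sub (X Y : M.V) : M.J (X - Y) = M.J X - M.J Y := by
  rw [sub_eq_add_neg, M.J_add, J_neg, sub_eq_add_neg]

lemma csmul_csmul (a b : ℂ) (X : M.V) : M.csmul a (M.csmul b X) = M.csmul (a*b) X := by
  unfold csmul; rw [smul_smul, ← map_mul]

lemma csmul_sub (c : ℂ) (X Y : M.V) : M.csmul c (X - Y) = M.csmul c X - M.csmul c Y :=
  smul_sub _ _ _

lemma csmul_add (c : ℂ) (X Y : M.V) : M.csmul c (X + Y) = M.csmul c X + M.csmul c Y :=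
  smul_add _ _ _

lemma csmul_neg (c : ℂ) (X : M.V) : M.csmul c (-X) = -(M.csmul c X) :=
  smul_neg _ _

lemma csmul_neg' (c : ℂ) (X : M.V) : M.csmul (-c) X = -(M.csmul c X) := by
  unfold csmul; rw [map_neg, neg_smul]

lemma csmul_neg_one (X : M.V) : M.csmul (-1) X = -X := by
  unfold csmul; rw [map_neg, map_one, neg_one_smul]

lemma csmul_one (X : M.V) : M.csmul 1 X = X := by
  unfold csmul; rw [map_one, one_smul]

lemma nabla_csmul_right (c : ℂ) (X Y : M.V) :
    M.nabla X (M.csmul c Y) = M.csmul c (M.nabla X Y) := by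
  unfold csmul; rw [M.nabla_leibniz, M.deriv_algebraMap, zero_smul, zero_add]

lemma nabla_csmul_left (c : ℂ) (X Y : M.V) :
    M.nabla (M.csmul c X) Y = M.csmul c (M.nabla X Y) :=
  M.nabla_smul_left _ _ _

lemma gJ_left (X Y : M.V) : M.g (M.J X) Y = - M.g X (M.J Y) := by
  have h := M.g_J X (M.J Y)
  rw [M.J_J, g_neg_right] at h
  rw [← h, neg_neg]

lemma gJ_swap (U V : M.V) : M.g (M.J U) V = - M.g (M.J V) U := by
  rw [gJ_left, M.g_symm]

lemma gJ_antiholo {W : M.V} (hW : M.J W = M.csmul (-Complex.I) W) (U : M.V) :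
    M.g (M.J U) W = M.cF Complex.I * M.g U W := by
  rw [gJ_left, hW, g_csmul_right, cF_neg, neg_mul, neg_neg]

lemma gJ_holo {Z : M.V} (hZ : M.J Z = M.csmul Complex.I Z) (U : M.V) :
    M.g (M.J U) Z = -(M.cF Complex.I * M.g U Z) := by
  rw [gJ_left, hZ, g_csmul_right]

/-- `dκ = 0` written in terms of `∇J`. -/
lemma dkappa (X Y Z : M.V) :
    M.g (M.nablaJ X Y) Z - M.g (M.nablaJ Y X) Z + M.g (M.nablaJ Z X) Y = 0 := by
  have hk := M.kappa_closed X Y Z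
  rw [← M.nabla_torsion_free X Y, ← M.nabla_torsion_free X Z,
    ← M.nabla_torsion_free Y Z] at hk
  have e1 := M.nabla_metric X (M.J Y) Z
  have e2 := M.nabla_metric Y (M.J X) Z
  have e3 := M.nabla_metric Z (M.J X) Y
  have s1 := gJ_swap (M := M) Y (M.nabla X Z)
  have s2 := gJ_swap (M := M) X (M.nabla Y Z)
  have s3 := gJ_swap (M := M) X (M.nabla Z Y)
  simp only [nablaJ, J_sub, g_sub_left, g_sub_right] at hk ⊢
  linear_combination hk - e1 + e2 - e3 - s1 + s2 - s3

lemma nablaJ_csmul_left (c : ℂ) (X Y : M.V) :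
    M.nablaJ (M.csmul c X) Y = M.csmul c (M.nablaJ X Y) := by
  unfold nablaJ
  rw [nabla_csmul_left, nabla_csmul_left, J_csmul, csmul_sub]

lemma nablaJ_anti_pair_holo {A Z : M.V} (X : M.V)
    (hA : M.J A = M.csmul (-Complex.I) A) (hZ : M.J Z = M.csmul Complex.I Z) :
    M.g (M.nablaJ X A) Z = 0 := by
  unfold nablaJ
  rw [hA, nabla_csmul_right, g_sub_left, g_csmul_left, gJ_holo hZ, cF_neg]
  ring

/-- The key almost Kähler fact: `(∇_{X^{0,1}} J) Y^{1,0} = 0`. -/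
lemma nablaJ_antiholo_holo {A C : M.V}
    (hA : M.J A = M.csmul (-Complex.I) A) (hC : M.J C = M.csmul Complex.I C) :
    M.nablaJ A C = 0 := by
  apply M.g_nondeg
  intro V
  set v1 := V - M.csmul Complex.I (M.J V) with hv1def
  set v2 := V + M.csmul Complex.I (M.J V) with hv2def
  have hv1 : M.J v1 = M.csmul Complex.I v1 := by
    rw [hv1def, J_sub, J_csmul, M.J_J, csmul_neg, sub_neg_eq_add, csmul_sub,
      csmul_csmul, Complex.I_mul_I, csmul_neg_one, sub_neg_eq_add]
    abel
  have hv2 : M.J v2 = M.csmul (-Complex.I) v2 := by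
    rw [hv2def, M.J_add, J_csmul, M.J_J, csmul_neg, csmul_add, csmul_csmul,
      show (-Complex.I * Complex.I) = 1 by rw [neg_mul, Complex.I_mul_I, neg_neg],
      csmul_one, csmul_neg' Complex.I V]
    abel
  have hg1 : M.g (M.nablaJ A C) v1 = 0 := by
    have hd := dkappa (M := M) A C v1
    rw [nablaJ_anti_pair_holo C hA hv1, nablaJ_anti_pair_holo v1 hA hC] at hd
    linear_combination hd
  have hg2 : M.g (M.nablaJ A C) v2 = 0 := by
    unfold nablaJ
    rw [hC, nabla_csmul_right, g_sub_left, g_csmul_left, gJ_antiholo hv2]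
    ring
  have hsum : M.g (M.nablaJ A C) V + M.g (M.nablaJ A C) V = 0 := by
    have hvv : v1 + v2 = V + V := by rw [hv1def, hv2def]; abel
    rw [← g_add_right, ← hvv, g_add_right, hg1, hg2, add_zero]
  have h2 : (2:ℂ) • M.g (M.nablaJ A C) V = 0 := by rw [two_smul]; exact hsum
  calc M.g (M.nablaJ A C) V = ((2:ℂ)⁻¹ * 2) • M.g (M.nablaJ A C) V := by
        rw [show ((2:ℂ)⁻¹ * 2) = 1 by norm_num, one_smul]
    _ = (2:ℂ)⁻¹ • ((2:ℂ) • M.g (M.nablaJ A C) V) := by rw [mul_smul]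
    _ = 0 := by rw [h2, smul_zero]

lemma gB_left {C W : M.V} (hC : M.J C = M.csmul Complex.I C)
    (hW : M.J W = M.csmul (-Complex.I) W) (V : M.V) : M.g (M.B V C) W = 0 := by
  unfold B nablaJ
  rw [hC]
  simp only [nabla_csmul_right]
  rw [J_sub, J_csmul, M.J_J, sub_neg_eq_add]
  simp only [g_sub_left, M.g_add_left, g_csmul_left, gJ_antiholo hW]
  linear_combination (M.g (M.nabla V C) W) * cF_I_I (M := M)

lemma gB_right {Y W : M.V} (hY : M.J Y = M.csmul Complex.I Y)
    (hW : M.J W = M.csmul (-Complex.I) W) (V : M.V) : M.g (M.B Y V) W = 0 := by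
  unfold B
  rw [hY, nablaJ_csmul_left, g_sub_left, g_csmul_left, gJ_antiholo hW]
  ring

lemma main_identity {A Y C W : M.V}
    (hA : M.J A = M.csmul (-Complex.I) A) (hY : M.J Y = M.csmul Complex.I Y)
    (hC : M.J C = M.csmul Complex.I C) (hW : M.J W = M.csmul (-Complex.I) W) :
    M.L A Y C W = M.cF (-2) * M.RJ A Y C W + M.cF 2 * M.R A Y C W := by
  have hkey : M.nablaJ A C = 0 := nablaJ_antiholo_holo hA hC
  have hJAC : M.J (M.nabla A C) = M.csmul Complex.I (M.nabla A C) := by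
    have h : M.nabla A (M.J C) - M.J (M.nabla A C) = 0 := hkey
    rw [sub_eq_zero] at h
    rw [← h, hC, nabla_csmul_right]
  have hB : M.B Y C =
      (M.nabla Y C + M.nabla Y C)
        + (M.csmul Complex.I (M.J (M.nabla Y C))
            + M.csmul Complex.I (M.J (M.nabla Y C))) := by
    unfold B nablaJ
    rw [hY, hC]
    simp only [nabla_csmul_right, nabla_csmul_left]
    simp only [J_sub, J_csmul, M.J_J, csmul_csmul, Complex.I_mul_I, csmul_neg_one,
      csmul_neg]
    abel
  have c2 : M.cF (2:ℂ) = 2 := map_ofNat _ 2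
  unfold L nablaB RJ R
  rw [g_sub_left, g_sub_left, gB_left hC hW, gB_right hY hW, hB, hC, hW, hJAC]
  simp only [nabla_csmul_right, M.nabla_add_right]
  simp only [g_sub_left, M.g_add_left, g_csmul_left, g_csmul_right]
  rw [cF_neg, cF_neg, c2]
  linear_combination (2 * (M.g (M.nabla Y (M.nabla A C)) W
    + M.g (M.nabla (M.bracket A Y) C) W)) * cF_I_I (M := M)

lemma conj_holo {X : M.V} (h : M.IsHolo X) :
    M.J (M.conjV X) = M.csmul (-Complex.I) (M.conjV X) := by
  have h' : M.J X = M.csmul Complex.I X := h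
  rw [← M.J_conj, h']
  unfold csmul
  rw [M.conjV_smul, M.conjF_algebraMap, Complex.conj_I]

end AlmostKahler

/-- Let `Z_1, …, Z_n` be a generalized normal holomorphic frame around a point `o`
of an almost Kähler manifold `(M,g,J,κ)`.  With `L(X,Y,Z,W) = g((∇_X B)(Y,Z), W)`,
`B(X,Y) = J(∇_X J)Y − (∇_{JX} J)Y`, `R` the Riemann curvature of `g`, and
`R^J(X,Y,Z,W) = g(∇_X J∇_Y Z − ∇_Y J∇_X Z − ∇_{[X,Y]} JZ, JW)`, one has for all
`i, j, r, s`: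
`L(Z̄_i, Z_j, Z_r, Z̄_s)(o) = −2 R^J(Z̄_i, Z_j, Z_r, Z̄_s)(o) + 2 R(Z̄_i, Z_j, Z_r, Z̄_s)(o)`. -/
theorem L_eq_neg_two_RJ_add_two_R_at_gnhf (M : AlmostKahler) (o : M.Point)
    (Z : Fin M.n → M.V) (hZ : M.IsGNHF o Z) (i j r s : Fin M.n) :
    M.eval o (M.L (M.conjV (Z i)) (Z j) (Z r) (M.conjV (Z s))) =
      -2 * M.eval o (M.RJ (M.conjV (Z i)) (Z j) (Z r) (M.conjV (Z s)))
      + 2 * M.eval o (M.R (M.conjV (Z i)) (Z j) (Z r) (M.conjV (Z s))) := by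
  have hA : M.J (M.conjV (Z i)) = M.csmul (-Complex.I) (M.conjV (Z i)) :=
    AlmostKahler.conj_holo (hZ.holo i)
  have hW : M.J (M.conjV (Z s)) = M.csmul (-Complex.I) (M.conjV (Z s)) :=
    AlmostKahler.conj_holo (hZ.holo s)
  have hY : M.J (Z j) = M.csmul Complex.I (Z j) := hZ.holo j
  have hC : M.J (Z r) = M.csmul Complex.I (Z r) := hZ.holo r
  rw [AlmostKahler.main_identity hA hY hC hW, M.eval_add, M.eval_mul, M.eval_mul,
    show M.eval o (M.cF (-2)) = -2 from M.eval_algebraMap o (-2),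
    show M.eval o (M.cF 2) = 2 from M.eval_algebraMap o 2]
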